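/- Let s_1 and s_2 be coprime positive integers with s_1 ≥ 6 or s_2 ≥ 6. Then there exist points (x, y) and (x', y') in the open square (0, 1/3)^2 ⊂ ℝ^2 such that s_1x + s_2y and s_1x' + s_2y' are two distinct positive integers. Consequently, the intersection of Γ_{s_1,s_2} with Π_3 meets the images of at least two distinct lines {(x,y) : s_1x + s_2y = k}, k ∈ ℤ; in particular it has at least two connected components. -/

import Mathlib

noncomputable section

/-- The two-dimensional torus `T² = (ℝ/ℤ)²`. -/
abbrev T2 := AddCircle (1 : ℝ) × AddCircle (1 : ℝ)

/-- The subgroup `Γ_{s₁,s₂} = {(θ₁, θ₂) ∈ T² : s₁θ₁ + s₂θ₂ = 0}`. -/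
def GammaSlope (s1 s2 : ℤ) : Set T2 := {θ : T2 | s1 • θ.1 + s2 • θ.2 = 0}

/-- `Π_r ⊂ T²`, the image under `q` of the open square `(0, 1/r)²`. -/
def PiSquare (r : ℕ) : Set T2 :=
  {θ : T2 | ∃ x y : ℝ, 0 < x ∧ x < 1 / (r : ℝ) ∧ 0 < y ∧ y < 1 / (r : ℝ) ∧
    θ = ((x : AddCircle (1 : ℝ)), (y : AddCircle (1 : ℝ)))}

/-! The diagonal points `x = y = k / (s₁ + s₂)`, `k = 1, 2`, lie on the lines `s₁x + s₂y = k`,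
and inside `(0, 1/3)²` because `s₁ + s₂ ≥ 7 > 2 · 3`. -/

lemma mk_mem_gammaSlope_of_eq_int {s1 s2 k : ℤ} {x y : ℝ}
    (h : (s1 : ℝ) * x + s2 * y = k) :
    ((x : AddCircle (1 : ℝ)), (y : AddCircle (1 : ℝ))) ∈ GammaSlope s1 s2 := by
  have hcoe : s1 • (x : AddCircle (1 : ℝ)) + s2 • (y : AddCircle (1 : ℝ)) =
      (((s1 : ℝ) * x + s2 * y : ℝ) : AddCircle (1 : ℝ)) := by
    simp only [← QuotientAddGroup.mk_zsmul, ← QuotientAddGroup.mk_add, zsmul_eq_mul]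
  simp only [GammaSlope, Set.mem_ofPred_eq, hcoe, h, AddCircle.coe_eq_zero_iff]
  exact ⟨k, by simp⟩

lemma exists_diag_mem_gammaSlope_inter_piSquare {s1 s2 k : ℤ} {r : ℕ}
    (hk : 0 < k) (hr : 0 < r) (hkr : k * r < s1 + s2) :
    ∃ x : ℝ, 0 < x ∧ x < 1 / r ∧ (s1 : ℝ) * x + s2 * x = k ∧
      ((x : AddCircle (1 : ℝ)), (x : AddCircle (1 : ℝ))) ∈ GammaSlope s1 s2 ∩ PiSquare r := by
  have hk' : (0 : ℝ) < k := by exact_mod_cast hk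
  have hr' : (0 : ℝ) < r := by exact_mod_cast hr
  have hkr' : (k : ℝ) * r < s1 + s2 := by exact_mod_cast hkr
  have hd : (0 : ℝ) < s1 + s2 := by nlinarith
  have hx0 : (0 : ℝ) < k / (s1 + s2) := by positivity
  have hxr : (k : ℝ) / (s1 + s2) < 1 / r := by rwa [div_lt_div_iff₀ hd hr', one_mul]
  have hxk : (s1 : ℝ) * (k / (s1 + s2)) + s2 * (k / (s1 + s2)) = k := by field_simp
  exact ⟨_, hx0, hxr, hxk, mk_mem_gammaSlope_of_eq_int hxk, _, _, hx0, hxr, hx0, hxr, rfl⟩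

theorem gammaSlope_inter_piSquare_two_lines
    (s1 s2 : ℤ) (h1 : 0 < s1) (h2 : 0 < s2)
    (h6 : 6 ≤ s1 ∨ 6 ≤ s2) :
    ∃ (x y x' y' : ℝ) (k k' : ℤ),
      0 < x ∧ x < 1 / 3 ∧ 0 < y ∧ y < 1 / 3 ∧
      0 < x' ∧ x' < 1 / 3 ∧ 0 < y' ∧ y' < 1 / 3 ∧
      0 < k ∧ 0 < k' ∧ k ≠ k' ∧
      (s1 : ℝ) * x + (s2 : ℝ) * y = (k : ℝ) ∧
      (s1 : ℝ) * x' + (s2 : ℝ) * y' = (k' : ℝ) ∧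
      ((x : AddCircle (1 : ℝ)), (y : AddCircle (1 : ℝ))) ∈ GammaSlope s1 s2 ∩ PiSquare 3 ∧
      ((x' : AddCircle (1 : ℝ)), (y' : AddCircle (1 : ℝ))) ∈ GammaSlope s1 s2 ∩ PiSquare 3 := by
  obtain ⟨x, hx0, hx3, hx1, hxmem⟩ :=
    exists_diag_mem_gammaSlope_inter_piSquare (s1 := s1) (s2 := s2) one_pos three_pos (by omega)
  obtain ⟨x', hx'0, hx'3, hx'2, hx'mem⟩ :=
    exists_diag_mem_gammaSlope_inter_piSquare (s1 := s1) (s2 := s2) two_pos three_pos (by omega)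
  rw [Nat.cast_ofNat] at hx3 hx'3
  exact ⟨x, x, x', x', 1, 2, hx0, hx3, hx0, hx3, hx'0, hx'3, hx'0, hx'3,
    one_pos, two_pos, by decide, hx1, hx'2, hxmem, hx'mem⟩
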